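/- Kluitmann/Hurwitz transitivity with fixed product: for a subset A of {1,...,d} and g ∈ S_A, the braid group acting by Hurwitz moves acts transitively on the set O_g of sequences (τ_1,...,τ_{w}) of transpositions in S_A with product g and entries generating S_A, provided w ≥ #A + s − 2 where s is the number of cycles of g on A and w ≡ #A − s (mod 2) — in particular, such a sequence can be transformed by braid moves into one of the form (τ'_1,...,τ'_{w−2}, τ, τ) with τ'_1,...,τ'_{w−2} generating S_A, whenever w ≥ 2·#A. -/

import Mathlib

/-- A single Hurwitz braid move on sequences of transpositions: replace an adjacent
pair `(a, b)` by `(b, b * a * b)` (for transpositions `b⁻¹ = b`). -/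
def BraidMove {G : Type*} [Group G] (l l' : List G) : Prop :=
  ∃ (l1 l2 : List G) (a b : G), l = l1 ++ a :: b :: l2 ∧ l' = l1 ++ b :: (b * a * b) :: l2

/-- The subgroup `S_A ⊆ S_d` of permutations acting as the identity outside `A`. -/
def fixingOutside {d : ℕ} (A : Finset (Fin d)) : Subgroup (Equiv.Perm (Fin d)) where
  carrier := {σ | ∀ x ∉ A, σ x = x}
  one_mem' := fun _ _ => rfl
  mul_mem' := by
    intro σ τ hσ hτ x hx
    simp only [Set.mem_setOf_eq] at *
    rw [Equiv.Perm.mul_apply, hτ x hx, hσ x hx]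
  inv_mem' := by
    intro σ hσ x hx
    simp only [Set.mem_setOf_eq] at *
    conv_lhs => rw [← hσ x hx]
    exact Equiv.symm_apply_apply σ x

namespace KTaux

variable {G : Type*} [Group G]

/-- Equivalence generated by braid moves. -/
abbrev RB (l l' : List G) : Prop := Relation.EqvGen BraidMove l l'

lemma RB.rfl {l : List G} : RB l l := Relation.EqvGen.refl l

lemma RB.symm {l l' : List G} (h : RB l l') : RB l' l := Relation.EqvGen.symm _ _ h

lemma RB.trans {a b c : List G} (h1 : RB a b) (h2 : RB b c) : RB a c :=
  Relation.EqvGen.trans _ _ _ h1 h2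

lemma bm_basic (a b : G) (t : List G) : BraidMove (a :: b :: t) (b :: (b * a * b) :: t) :=
  ⟨[], t, a, b, rfl, rfl⟩

lemma RB.basic (a b : G) (t : List G) : RB (a :: b :: t) (b :: (b * a * b) :: t) :=
  Relation.EqvGen.rel _ _ (bm_basic a b t)

lemma _root_.BraidMove.cons {l l' : List G} (c : G) (h : BraidMove l l') :
    BraidMove (c :: l) (c :: l') := by
  obtain ⟨l1, l2, a, b, h1, h2⟩ := h
  exact ⟨c :: l1, l2, a, b, by simp [h1], by simp [h2]⟩

lemma _root_.BraidMove.app_right {l l' : List G} (m : List G) (h : BraidMove l l') :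
    BraidMove (l ++ m) (l' ++ m) := by
  obtain ⟨l1, l2, a, b, h1, h2⟩ := h
  exact ⟨l1, l2 ++ m, a, b, by simp [h1], by simp [h2]⟩

lemma RB.cons {l l' : List G} (c : G) (h : RB l l') : RB (c :: l) (c :: l') := by
  induction h with
  | rel a b hab => exact .rel _ _ (hab.cons c)
  | refl => exact .refl _
  | symm a b _ ih => exact ih.symm
  | trans a b c' _ _ ih1 ih2 => exact ih1.trans ih2

lemma RB.app_left (m : List G) {l l' : List G} (h : RB l l') : RB (m ++ l) (m ++ l') := by
  induction m with
  | nil => simpa using h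
  | cons c m ih => exact ih.cons c

lemma RB.app_right (m : List G) {l l' : List G} (h : RB l l') : RB (l ++ m) (l' ++ m) := by
  induction h with
  | rel a b hab => exact .rel _ _ (hab.app_right m)
  | refl => exact .refl _
  | symm a b _ ih => exact ih.symm
  | trans a b c' _ _ ih1 ih2 => exact ih1.trans ih2

lemma RB.slide {τ : G} (hτ : τ * τ = 1) (c : G) (t : List G) :
    RB (c :: τ :: τ :: t) (τ :: τ :: c :: t) := by
  have h1 := RB.basic c τ (τ :: t)
  have h2 := (RB.basic (τ * c * τ) τ t).cons τ
  have e : τ * (τ * c * τ) * τ = c := by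
    have : τ * (τ * c * τ) * τ = (τ * τ) * c * (τ * τ) := by group
    rw [this, hτ]; group
  rw [e] at h2
  exact h1.trans h2

lemma RB.slideN {τ : G} (hτ : τ * τ = 1) (N : List G) (t : List G) :
    RB (N ++ τ :: τ :: t) (τ :: τ :: (N ++ t)) := by
  induction N with
  | nil => exact .rfl
  | cons c N ih => exact (ih.cons c).trans (RB.slide hτ c (N ++ t))

lemma RB.pair_conj (τ c : G) (t : List G) :
    RB (τ :: τ :: c :: t) (c :: (c * τ * c) :: (c * τ * c) :: t) :=
  ((RB.basic τ c t).cons τ).trans (RB.basic τ c ((c * τ * c) :: t))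

lemma _root_.BraidMove.length_eq {l l' : List G} (h : BraidMove l l') : l.length = l'.length := by
  obtain ⟨l1, l2, a, b, h1, h2⟩ := h; simp [h1, h2]

lemma RB.length_eq {l l' : List G} (h : RB l l') : l.length = l'.length := by
  induction h with
  | rel a b hab => exact hab.length_eq
  | refl => rfl
  | symm _ _ _ ih => exact ih.symm
  | trans _ _ _ _ _ ih1 ih2 => exact ih1.trans ih2

lemma _root_.BraidMove.closure_eq {l l' : List G} (h : BraidMove l l') :
    Subgroup.closure {x | x ∈ l} = Subgroup.closure {x | x ∈ l'} := by
  obtain ⟨l1, l2, a, b, h1, h2⟩ := h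
  subst h1; subst h2
  apply le_antisymm <;> rw [Subgroup.closure_le] <;> intro z hz <;>
    rw [SetLike.mem_coe] <;>
    simp only [Set.mem_setOf_eq, List.mem_append, List.mem_cons] at hz
  · have hb : b ∈ Subgroup.closure {x | x ∈ l1 ++ b :: (b * a * b) :: l2} :=
      Subgroup.subset_closure (by simp)
    have hbab : b * a * b ∈ Subgroup.closure {x | x ∈ l1 ++ b :: (b * a * b) :: l2} :=
      Subgroup.subset_closure (by simp)
    rcases hz with h | h | h | h
    · exact Subgroup.subset_closure (by simp [h])
    · have e : b⁻¹ * (b * a * b) * b⁻¹ = a := by group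
      rw [h]
      have hm := mul_mem (mul_mem (inv_mem hb) hbab) (inv_mem hb)
      rwa [e] at hm
    · exact Subgroup.subset_closure (by simp [h])
    · exact Subgroup.subset_closure (by simp [h])
  · have ha : a ∈ Subgroup.closure {x | x ∈ l1 ++ a :: b :: l2} :=
      Subgroup.subset_closure (by simp)
    have hb : b ∈ Subgroup.closure {x | x ∈ l1 ++ a :: b :: l2} :=
      Subgroup.subset_closure (by simp)
    rcases hz with h | h | h | h
    · exact Subgroup.subset_closure (by simp [h])
    · rw [h]; exact hb
    · rw [h]; exact mul_mem (mul_mem hb ha) hb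
    · exact Subgroup.subset_closure (by simp [h])

lemma RB.closure_eq {l l' : List G} (h : RB l l') :
    Subgroup.closure {x | x ∈ l} = Subgroup.closure {x | x ∈ l'} := by
  induction h with
  | rel a b hab => exact hab.closure_eq
  | refl => rfl
  | symm _ _ _ ih => exact ih.symm
  | trans _ _ _ _ _ ih1 ih2 => exact ih1.trans ih2



section Perm

open Equiv Equiv.Perm

variable {d : ℕ}

/-- Entries are all transpositions with support inside `A`. -/
def SwA (A : Finset (Fin d)) (l : List (Perm (Fin d))) : Prop :=
  ∀ τ ∈ l, τ.IsSwap ∧ τ.support ⊆ A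

lemma swap_sq {τ : Perm (Fin d)} (h : τ.IsSwap) : τ * τ = 1 := by
  obtain ⟨u, v, huv, rfl⟩ := h; exact Equiv.swap_mul_self u v

lemma swap_inv_eq {τ : Perm (Fin d)} (h : τ.IsSwap) : τ⁻¹ = τ := by
  obtain ⟨u, v, huv, rfl⟩ := h; exact Equiv.swap_inv u v

lemma mapsA {A : Finset (Fin d)} {σ : Perm (Fin d)} (hσ : σ.support ⊆ A) {u : Fin d}
    (hu : u ∈ A) : σ u ∈ A := by
  by_cases h : σ u = u
  · rwa [h]
  · exact hσ (apply_mem_support.mpr (mem_support.mpr h))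

lemma conj_swapA {A : Finset (Fin d)} {a b : Perm (Fin d)} (ha : a.IsSwap) (haA : a.support ⊆ A)
    (hb : b.IsSwap) (hbA : b.support ⊆ A) :
    (b * a * b).IsSwap ∧ (b * a * b).support ⊆ A := by
  obtain ⟨u, v, huv, rfl⟩ := ha
  have hbinv : b⁻¹ = b := swap_inv_eq hb
  have he : b * Equiv.swap u v * b = Equiv.swap (b u) (b v) := by
    rw [swap_apply_apply]; rw [hbinv]
  have hne : b u ≠ b v := fun hc => huv (b.injective hc)
  have hsupp : (Equiv.swap u v).support = {u, v} := support_swap huv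
  have huA : u ∈ A := haA (by rw [hsupp]; simp)
  have hvA : v ∈ A := haA (by rw [hsupp]; simp)
  constructor
  · rw [he]; exact ⟨b u, b v, hne, rfl⟩
  · rw [he, support_swap hne]
    intro z hz
    simp only [Finset.mem_insert, Finset.mem_singleton] at hz
    rcases hz with rfl | rfl
    · exact mapsA hbA huA
    · exact mapsA hbA hvA

lemma bm_swA {A : Finset (Fin d)} {l l' : List (Perm (Fin d))} (h : BraidMove l l') :
    (SwA A l ↔ SwA A l') ∧ (SwA A l → l.prod = l'.prod) := by
  obtain ⟨l1, l2, a, b, h1, h2⟩ := h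
  subst h1; subst h2
  have hmem : ∀ (c : Perm (Fin d)) (t1 t2 : List (Perm (Fin d))) (p q : Perm (Fin d)),
      c ∈ t1 ++ p :: q :: t2 ↔ (c ∈ t1 ∨ c = p ∨ c = q ∨ c ∈ t2) := by
    intro c t1 t2 p q; simp [List.mem_append]
  constructor
  · constructor
    · intro hs τ hτ
      rw [hmem] at hτ
      have hA := hs a (by rw [hmem]; tauto)
      have hB := hs b (by rw [hmem]; tauto)
      rcases hτ with h | rfl | rfl | h
      · exact hs τ (by rw [hmem]; tauto)
      · exact hB
      · exact conj_swapA hA.1 hA.2 hB.1 hB.2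
      · exact hs τ (by rw [hmem]; tauto)
    · intro hs τ hτ
      rw [hmem] at hτ
      have hB := hs b (by rw [hmem]; tauto)
      have hBAB := hs (b * a * b) (by rw [hmem]; tauto)
      have hA : a.IsSwap ∧ a.support ⊆ A := by
        have := conj_swapA hBAB.1 hBAB.2 hB.1 hB.2
        have e : b * (b * a * b) * b = a := by
          have hb2 : b * b = 1 := swap_sq hB.1
          have : b * (b * a * b) * b = (b * b) * a * (b * b) := by group
          rw [this, hb2]; group
        rwa [e] at this
      rcases hτ with h | rfl | rfl | h
      · exact hs τ (by rw [hmem]; tauto)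
      · exact hA
      · exact hB
      · exact hs τ (by rw [hmem]; tauto)
  · intro hs
    have hb2 : b * b = 1 := swap_sq (hs b (by rw [hmem]; tauto)).1
    have e : a * b = b * (b * a * b) := by
      have : b * (b * a * b) = (b * b) * (a * b) := by group
      rw [this, hb2, one_mul]
    simp only [List.prod_append, List.prod_cons]
    rw [← mul_assoc a b, e, mul_assoc]

lemma RB.swA_prod {A : Finset (Fin d)} {l l' : List (Perm (Fin d))} (h : RB l l') :
    (SwA A l ↔ SwA A l') ∧ (SwA A l → l.prod = l'.prod) := by
  induction h with
  | rel a b hab => exact bm_swA hab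
  | refl => exact ⟨Iff.rfl, fun _ => Eq.refl _⟩
  | symm a b _ ih => exact ⟨ih.1.symm, fun h' => (ih.2 (ih.1.mpr h')).symm⟩
  | trans a b c _ _ ih1 ih2 =>
      exact ⟨ih1.1.trans ih2.1, fun h' => (ih1.2 h').trans (ih2.2 (ih1.1.mp h'))⟩

/-- Two points are linked by an entry of `s`. -/
def stepE (s : Set (Perm (Fin d))) (u v : Fin d) : Prop :=
  ∃ τ ∈ s, u ∈ τ.support ∧ v ∈ τ.support

/-- The entries of `s` connect all points of `A`. -/
def Conn (A : Finset (Fin d)) (s : Set (Perm (Fin d))) : Prop :=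
  ∀ u ∈ A, ∀ v ∈ A, Relation.ReflTransGen (stepE s) u v

lemma stepE_symm {s : Set (Perm (Fin d))} : Symmetric (stepE s) := by
  rintro u v ⟨τ, h1, h2, h3⟩; exact ⟨τ, h1, h3, h2⟩

lemma rtg_symm {s : Set (Perm (Fin d))} {u v : Fin d}
    (h : Relation.ReflTransGen (stepE s) u v) : Relation.ReflTransGen (stepE s) v u :=
  haveI : Std.Symm (stepE s) := ⟨fun _ _ h => stepE_symm h⟩
  Relation.ReflTransGen.symmetric.symm _ _ h

lemma mem_fixingOutside {A : Finset (Fin d)} {σ : Perm (Fin d)} :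
    σ ∈ fixingOutside A ↔ ∀ x ∉ A, σ x = x := Iff.rfl

lemma swap_mem_fixingOutside {A : Finset (Fin d)} {u v : Fin d} (hu : u ∈ A) (hv : v ∈ A) :
    Equiv.swap u v ∈ fixingOutside A :=
  mem_fixingOutside.mpr fun z hz =>
    Equiv.swap_apply_of_ne_of_ne (fun hc => hz (hc ▸ hu)) (fun hc => hz (hc ▸ hv))

lemma closure_le_fixing {A : Finset (Fin d)} {l : List (Perm (Fin d))} (hl : SwA A l) :
    Subgroup.closure {x | x ∈ l} ≤ fixingOutside A := by
  rw [Subgroup.closure_le]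
  intro τ hτ
  exact mem_fixingOutside.mpr fun z hz => notMem_support.mp (fun hc => hz ((hl τ hτ).2 hc))

lemma conn_of_closure {A : Finset (Fin d)} {l : List (Perm (Fin d))} (h2 : 2 ≤ A.card)
    (hcl : Subgroup.closure {x | x ∈ l} = fixingOutside A) :
    Conn A {x | x ∈ l} := by
  intro u hu v hv
  by_cases huv : u = v
  · rw [huv]
  have hsw : Equiv.swap u v ∈ Subgroup.closure {x | x ∈ l} := by
    rw [hcl]; exact swap_mem_fixingOutside hu hv
  have key : ∀ σ, σ ∈ Subgroup.closure {x | x ∈ l} →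
      ∀ z : Fin d, Relation.ReflTransGen (stepE {x | x ∈ l}) z (σ z) := by
    intro σ hσ
    induction hσ using Subgroup.closure_induction with
    | mem τ hτ =>
        intro z
        by_cases hz : z ∈ τ.support
        · exact Relation.ReflTransGen.single ⟨τ, hτ, hz, apply_mem_support.mpr hz⟩
        · rw [notMem_support.mp hz]
    | one => intro z; simp only [Perm.one_apply]; exact Relation.ReflTransGen.refl
    | mul σ1 σ2 _ _ ih1 ih2 =>
        intro z
        exact (ih2 z).trans (ih1 (σ2 z))
    | inv σ1 _ ih =>
        intro z
        have := ih (σ1⁻¹ z)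
        rw [show σ1 (σ1⁻¹ z) = z from Equiv.apply_symm_apply σ1 z] at this
        exact rtg_symm this
  have := key _ hsw u
  rwa [Equiv.swap_apply_left] at this

lemma exists_swap_factorization {A : Finset (Fin d)} :
    ∀ (n : ℕ) (σ : Perm (Fin d)), σ ∈ fixingOutside A → σ.support.card ≤ n →
    ∃ L : List (Perm (Fin d)), L.prod = σ ∧
      ∀ τ ∈ L, ∃ u v, u ∈ A ∧ v ∈ A ∧ u ≠ v ∧ τ = Equiv.swap u v := by
  intro n
  induction n with
  | zero =>
      intro σ hσ hc
      have : σ.support = ∅ := Finset.card_eq_zero.mp (Nat.le_zero.mp hc)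
      rw [support_eq_empty_iff] at this
      exact ⟨[], by simp [this], by simp⟩
  | succ n ih =>
      intro σ hσ hc
      by_cases h1 : σ = 1
      · exact ⟨[], by simp [h1], by simp⟩
      · have hsupp : σ.support ⊆ A := by
          intro z hz
          by_contra hzA
          exact (mem_support.mp hz) (hσ z hzA)
        have hne : σ.support ≠ ∅ := fun hc => h1 (support_eq_empty_iff.mp hc)
        obtain ⟨u, hu⟩ := Finset.nonempty_iff_ne_empty.mpr hne
        have huσ : σ u ≠ u := mem_support.mp hu
        have huA : u ∈ A := hsupp hu
        have hσuA : σ u ∈ A := hsupp (apply_mem_support.mpr hu)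
        have hlt := card_support_swap_mul huσ
        have hmem : Equiv.swap u (σ u) * σ ∈ fixingOutside A :=
          mul_mem (swap_mem_fixingOutside huA hσuA) hσ
        obtain ⟨L, hL1, hL2⟩ := ih (Equiv.swap u (σ u) * σ) hmem (by omega)
        refine ⟨Equiv.swap u (σ u) :: L, ?_, ?_⟩
        · rw [List.prod_cons, hL1, ← mul_assoc, Equiv.swap_mul_self, one_mul]
        · intro τ hτ
          rcases List.mem_cons.mp hτ with rfl | h
          · exact ⟨u, σ u, huA, hσuA, fun hc => huσ hc.symm, rfl⟩
          · exact hL2 τ h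

lemma swap_eq_of_supp {τ : Perm (Fin d)} (hτ : τ.IsSwap) {a b : Fin d} (ha : a ∈ τ.support)
    (hb : b ∈ τ.support) (hab : a ≠ b) : τ = Equiv.swap a b := by
  obtain ⟨p, q, hpq, rfl⟩ := hτ
  rw [support_swap hpq] at ha hb
  simp only [Finset.mem_insert, Finset.mem_singleton] at ha hb
  rcases ha with rfl | rfl <;> rcases hb with rfl | rfl
  · exact absurd rfl hab
  · rfl
  · exact Equiv.swap_comm _ _
  · exact absurd rfl hab

lemma swap_mem_closure_of_conn {s : Set (Perm (Fin d))} (hs : ∀ τ ∈ s, τ.IsSwap)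
    {u v : Fin d} (h : Relation.ReflTransGen (stepE s) u v) :
    u = v ∨ Equiv.swap u v ∈ Subgroup.closure s := by
  induction h with
  | refl => exact Or.inl rfl
  | @tail v' v h1 hstep ih =>
      obtain ⟨τ, hτ, hv', hv⟩ := hstep
      by_cases huv : u = v
      · exact Or.inl huv
      right
      by_cases hvv : v' = v
      · rcases ih with rfl | hsw
        · exact absurd hvv huv
        · rwa [hvv] at hsw
      have hτeq : τ = Equiv.swap v' v := swap_eq_of_supp (hs τ hτ) hv' hv hvv
      have hτcl : τ ∈ Subgroup.closure s := Subgroup.subset_closure hτ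
      by_cases huv' : u = v'
      · subst huv'; rw [hτeq] at hτcl; exact hτcl
      rcases ih with rfl | hsw
      · exact absurd rfl huv'
      · have he : Equiv.swap u v = τ * Equiv.swap u v' * τ⁻¹ := by
          have h1' : τ u = u := by
            rw [hτeq]; exact Equiv.swap_apply_of_ne_of_ne huv' huv
          have h2' : τ v' = v := by rw [hτeq]; exact Equiv.swap_apply_left _ _
          have h3' := swap_apply_apply τ u v'
          rw [h1', h2'] at h3'
          exact h3'
        rw [he]
        exact mul_mem (mul_mem hτcl hsw) (inv_mem hτcl)

lemma closure_eq_of_conn {A : Finset (Fin d)} {l : List (Perm (Fin d))} (hl : SwA A l)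
    (hc : Conn A {x | x ∈ l}) :
    Subgroup.closure {x | x ∈ l} = fixingOutside A := by
  apply le_antisymm (closure_le_fixing hl)
  intro σ hσ
  obtain ⟨L, hL1, hL2⟩ := exists_swap_factorization σ.support.card σ hσ le_rfl
  rw [← hL1]
  apply list_prod_mem
  intro τ hτ
  obtain ⟨u, v, huA, hvA, huv, rfl⟩ := hL2 τ hτ
  rcases swap_mem_closure_of_conn (fun τ' hτ' => (hl τ' hτ').1) (hc u huA v hvA) with h | h
  · exact absurd h huv
  · exact h

/-- Number of entries whose support contains `x`. -/
def xc (x : Fin d) : List (Perm (Fin d)) → ℕ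
  | [] => 0
  | τ :: t => (if x ∈ τ.support then 1 else 0) + xc x t

lemma xc_append (x : Fin d) (l1 l2 : List (Perm (Fin d))) :
    xc x (l1 ++ l2) = xc x l1 + xc x l2 := by
  induction l1 with
  | nil => simp [xc]
  | cons τ t ih => simp [xc, ih]; omega

lemma xc_of_free {x : Fin d} {l : List (Perm (Fin d))} (h : ∀ τ ∈ l, x ∉ τ.support) :
    xc x l = 0 := by
  induction l with
  | nil => rfl
  | cons τ t ih =>
      simp only [xc, if_neg (h τ (by simp))]
      rw [ih (fun τ' hτ' => h τ' (by simp [hτ']))]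

lemma xc_of_full {x : Fin d} {l : List (Perm (Fin d))} (h : ∀ τ ∈ l, x ∈ τ.support) :
    xc x l = l.length := by
  induction l with
  | nil => rfl
  | cons τ t ih =>
      simp only [xc, if_pos (h τ (by simp)), List.length_cons]
      rw [ih (fun τ' hτ' => h τ' (by simp [hτ']))]
      omega

lemma xc_pos_of_mem {x : Fin d} {l : List (Perm (Fin d))} {τ : Perm (Fin d)} (hτ : τ ∈ l)
    (hx : x ∈ τ.support) : 1 ≤ xc x l := by
  induction l with
  | nil => simp at hτ
  | cons σ t ih =>
      rcases List.mem_cons.mp hτ with rfl | h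
      · simp only [xc, if_pos hx]; omega
      · have := ih h
        simp only [xc]
        omega

lemma move_right {x : Fin d} :
    ∀ (P : List (Perm (Fin d))) (τ : Perm (Fin d)) (t : List (Perm (Fin d))),
    (∀ c ∈ P, x ∉ c.support) → x ∈ τ.support →
    ∃ τ', RB (τ :: (P ++ t)) (P ++ τ' :: t) ∧ x ∈ τ'.support := by
  intro P
  induction P with
  | nil => exact fun τ t _ hτ => ⟨τ, Relation.EqvGen.refl _, hτ⟩
  | cons c P ih =>
      intro τ t hP hτ
      have hc : x ∉ c.support := hP c (by simp)
      have hcx : c x = x := notMem_support.mp hc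
      have hx' : x ∈ (c * τ * c).support := by
        rw [mem_support]
        simp only [Perm.mul_apply]
        rw [hcx]
        intro hcon
        have hinv : c⁻¹ x = x := by
          conv_lhs => rw [← hcx]
          exact Equiv.symm_apply_apply c x
        have h3 : c⁻¹ (c (τ x)) = c⁻¹ x := by rw [hcon]
        rw [show c⁻¹ (c (τ x)) = τ x from Equiv.symm_apply_apply c (τ x), hinv] at h3
        exact (mem_support.mp hτ) h3
      obtain ⟨τ', h5, h6⟩ := ih (c * τ * c) t (fun c' hc' => hP c' (by simp [hc'])) hx'
      refine ⟨τ', ?_, h6⟩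
      have h0 : RB (τ :: c :: (P ++ t)) (c :: (c * τ * c) :: (P ++ t)) := RB.basic τ c (P ++ t)
      have h1 : RB (c :: (c * τ * c) :: (P ++ t)) (c :: (P ++ τ' :: t)) := h5.cons c
      simpa using h0.trans h1

lemma gather (x : Fin d) (l : List (Perm (Fin d))) :
    ∃ P Q : List (Perm (Fin d)),
      RB l (P ++ Q) ∧ (∀ c ∈ P, x ∉ c.support) ∧ (∀ τ ∈ Q, x ∈ τ.support) ∧
      Q.length = xc x l := by
  induction l with
  | nil => exact ⟨[], [], Relation.EqvGen.refl _, by simp, by simp, rfl⟩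
  | cons τ t ih =>
      obtain ⟨P, Q, h1, h2, h3, h4⟩ := ih
      by_cases hx : x ∈ τ.support
      · obtain ⟨τ', h5, h6⟩ := move_right P τ Q h2 hx
        refine ⟨P, τ' :: Q, (h1.cons τ).trans h5, h2, ?_, ?_⟩
        · intro σ hσ
          rcases List.mem_cons.mp hσ with rfl | h
          · exact h6
          · exact h3 σ h
        · simp only [List.length_cons, xc, if_pos hx, h4]; omega
      · refine ⟨τ :: P, Q, h1.cons τ, ?_, h3, ?_⟩
        · intro σ hσ
          rcases List.mem_cons.mp hσ with rfl | h
          · exact hx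
          · exact h2 σ h
        · simp only [xc, if_neg hx, h4]; omega

lemma exists_x_entry {A : Finset (Fin d)} {x : Fin d} {l : List (Perm (Fin d))} (hx : x ∈ A)
    (h2 : 2 ≤ A.card) (hcl : Subgroup.closure {y | y ∈ l} = fixingOutside A) :
    ∃ τ ∈ l, x ∈ τ.support := by
  obtain ⟨y, hyA, hyx⟩ := Finset.exists_mem_ne (s := A) (by omega) x
  have hconn := conn_of_closure h2 hcl x hx y hyA
  rcases Relation.ReflTransGen.cases_head hconn with h | ⟨c, ⟨τ, hτ, hxs, _⟩, _⟩
  · exact absurd h.symm hyx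
  · exact ⟨τ, hτ, hxs⟩

lemma swap_x_form {x : Fin d} {τ : Perm (Fin d)} (hτ : τ.IsSwap) (hx : x ∈ τ.support) :
    ∃ a, a ≠ x ∧ τ = Equiv.swap x a := by
  obtain ⟨p, q, hpq, rfl⟩ := hτ
  rw [support_swap hpq] at hx
  simp only [Finset.mem_insert, Finset.mem_singleton] at hx
  rcases hx with rfl | rfl
  · exact ⟨q, fun hc => hpq hc.symm, rfl⟩
  · exact ⟨p, fun hc => hpq hc, Equiv.swap_comm p x⟩

lemma adj_or_replicate (Q : List (Perm (Fin d))) :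
    (∃ c, Q = List.replicate Q.length c) ∨
    (∃ Q1 Q2 a b, a ≠ b ∧ Q = Q1 ++ a :: b :: Q2) := by
  induction Q with
  | nil => exact Or.inl ⟨1, rfl⟩
  | cons τ t ih =>
      cases t with
      | nil => exact Or.inl ⟨τ, rfl⟩
      | cons σ t2 =>
          by_cases hτσ : τ = σ
          · rcases ih with ⟨c, hc⟩ | ⟨Q1, Q2, a, b, hab, hQ⟩
            · left
              have hc2 := hc
              rw [List.length_cons, List.replicate_succ] at hc2
              injection hc2 with e1 _
              refine ⟨c, ?_⟩
              rw [List.length_cons, List.replicate_succ, ← hc, hτσ, e1]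
            · right
              exact ⟨τ :: Q1, Q2, a, b, hab, by simp [hQ]⟩
          · right
            exact ⟨[], t2, τ, σ, hτσ, rfl⟩

lemma confined {P Q : List (Perm (Fin d))} {x a : Fin d} (q : Perm (Fin d))
    (hP : ∀ c ∈ P, x ∉ c.support) (hPa : ∀ c ∈ P, a ∉ c.support)
    (hQ : ∀ τ ∈ Q, τ = q) (hqs : q.support ⊆ {x, a}) :
    ∀ u v, Relation.ReflTransGen (stepE {y | y ∈ P ++ Q}) u v →
      u ∈ ({x, a} : Finset (Fin d)) → v ∈ ({x, a} : Finset (Fin d)) := by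
  intro u v h
  induction h with
  | refl => exact id
  | @tail v' v h1 hstep ih =>
      intro hu
      have hv'm := ih hu
      obtain ⟨τ, hτ, hv', hv⟩ := hstep
      rcases List.mem_append.mp hτ with hp | hq2
      · exfalso
        rcases Finset.mem_insert.mp hv'm with rfl | h'
        · exact hP τ hp hv'
        · rw [Finset.mem_singleton] at h'
          subst h'
          exact hPa τ hp hv'
      · rw [hQ τ hq2] at hv
        exact hqs hv

lemma reduceX {A : Finset (Fin d)} {x : Fin d} (hx : x ∈ A) (h3 : 3 ≤ A.card) :
    ∀ (k : ℕ) (l : List (Perm (Fin d))), xc x l ≤ k → SwA A l →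
      Subgroup.closure {y | y ∈ l} = fixingOutside A →
      ∃ (P : List (Perm (Fin d))) (m : ℕ) (a : Fin d),
        RB l (P ++ List.replicate m (Equiv.swap x a)) ∧ (∀ c ∈ P, x ∉ c.support) ∧
        1 ≤ m ∧ m ≤ 2 ∧ a ∈ A ∧ a ≠ x := by
  intro k
  induction k with
  | zero =>
      intro l hk hsw hcl
      obtain ⟨τ, hτ, hxτ⟩ := exists_x_entry hx (by omega) hcl
      have := xc_pos_of_mem hτ hxτ
      omega
  | succ k ih =>
      intro l hk hsw hcl
      obtain ⟨P, Q, hPQ, hP, hQ, hlen⟩ := gather x l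
      have hswPQ : SwA A (P ++ Q) := (hPQ.swA_prod).1.mp hsw
      have hclPQ : Subgroup.closure {y | y ∈ P ++ Q} = fixingOutside A := by
        rw [← hPQ.closure_eq]; exact hcl
      have hxcl : 1 ≤ xc x l := by
        obtain ⟨τ, hτ, hxτ⟩ := exists_x_entry hx (by omega) hcl
        exact xc_pos_of_mem hτ hxτ
      rcases adj_or_replicate Q with ⟨q, hrep⟩ | ⟨Q1, Q2, τa, τb, hab, hQeq⟩
      · -- tail is constant
        have hQlen : 1 ≤ Q.length := by omega
        have hqQ : q ∈ Q := by
          rw [hrep]; exact List.mem_replicate.mpr ⟨by omega, rfl⟩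
        have hqsw := hswPQ q (List.mem_append.mpr (Or.inr hqQ))
        have hqx : x ∈ q.support := hQ q hqQ
        obtain ⟨a, hax, hqa⟩ := swap_x_form hqsw.1 hqx
        have hxa : x ≠ a := fun hc => hax hc.symm
        have hqsupp : q.support = {x, a} := by rw [hqa]; exact support_swap hxa
        have haA : a ∈ A := hqsw.2 (by rw [hqsupp]; simp)
        by_cases hlen2 : Q.length ≤ 2
        · refine ⟨P, Q.length, a, ?_, hP, by omega, hlen2, haA, hax⟩
          rw [← hqa, ← hrep]
          exact hPQ
        · -- at least 3 equal tail entries; stir using an entry of P touching a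
          have hPa : ∃ c ∈ P, a ∈ c.support := by
            by_contra hcon
            push_neg at hcon
            have h1card : 1 ≤ ((A.erase x).erase a).card := by
              have e1 := Finset.card_erase_of_mem hx
              by_cases hmem : a ∈ A.erase x
              · have e2 := Finset.card_erase_of_mem hmem; omega
              · rw [Finset.erase_eq_of_notMem hmem]; omega
            have h1card' : 0 < ((A.erase x).erase a).card := by omega
            obtain ⟨z, hz⟩ := Finset.card_pos.mp h1card'
            rw [Finset.mem_erase, Finset.mem_erase] at hz
            obtain ⟨hza, hzx, hzA⟩ := hz
            have hconn := conn_of_closure (by omega) hclPQ a haA z hzA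
            have hrepQ : ∀ τ ∈ Q, τ = q := by
              intro τ hτ
              rw [hrep] at hτ
              exact (List.mem_replicate.mp hτ).2
            have := confined q hP hcon hrepQ (by rw [hqsupp]) a z hconn (by simp)
            rcases Finset.mem_insert.mp this with h' | h'
            · exact hzx h'
            · exact hza (Finset.mem_singleton.mp h')
          obtain ⟨c, hcP, hca⟩ := hPa
          have hcsw := hswPQ c (List.mem_append.mpr (Or.inl hcP))
          have hcx : x ∉ c.support := hP c hcP
          obtain ⟨b, hba, hcb⟩ := swap_x_form (x := a) hcsw.1 hca
          have hcsupp : c.support = {a, b} := by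
            rw [hcb]; exact support_swap (fun hc' => hba hc'.symm)
          have hbx : b ≠ x := by
            intro hc'
            subst hc'
            exact hcx (by rw [hcsupp]; simp)
          have hbA : b ∈ A := hcsw.2 (by rw [hcsupp]; simp)
          obtain ⟨P1, P2, hPsplit⟩ := List.append_of_mem hcP
          obtain ⟨j, hj⟩ : ∃ j, Q.length = j + 3 := ⟨Q.length - 3, by omega⟩
          have hq2 : q * q = 1 := swap_sq hqsw.1
          set q' := Equiv.swap x b with hq'def
          have hq'2 : q' * q' = 1 := Equiv.swap_mul_self x b
          have hcinv : c⁻¹ = c := swap_inv_eq hcsw.1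
          have hqinv : q⁻¹ = q := swap_inv_eq hqsw.1
          have hcxx : c x = x := notMem_support.mp hcx
          have hcab : c a = b := by rw [hcb]; exact Equiv.swap_apply_left a b
          have hcc : c * q * c = q' := by
            have h1 := swap_apply_apply c x a
            rw [hcxx, hcab, hcinv, ← hqa] at h1
            exact h1.symm
          have hqq : q * q' * q = Equiv.swap a b := by
            have h1 := swap_apply_apply q x b
            have hqxa : q x = a := by rw [hqa]; exact Equiv.swap_apply_left x a
            have hqbb : q b = b := by
              rw [hqa]
              exact Equiv.swap_apply_of_ne_of_ne hbx hba
            rw [hqxa, hqbb, hqinv, ← hq'def] at h1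
            exact h1.symm
          set T := List.replicate (j + 1) q with hTdef
          have hT : Q = q :: q :: T := by
            rw [hrep, hj, hTdef]
            simp [List.replicate_succ]
          have e0 : P ++ Q = P1 ++ (c :: (P2 ++ (q :: q :: T))) := by
            rw [hPsplit, hT]; simp
          have s1 : RB (P ++ Q) (P1 ++ (c :: (q :: q :: (P2 ++ T)))) := by
            rw [e0]; exact ((RB.slideN hq2 P2 T).cons c).app_left P1
          have s2 : RB (P1 ++ (c :: (q :: q :: (P2 ++ T))))
              (P1 ++ (c :: (q' :: q' :: (P2 ++ T)))) := by
            have h5 := ((RB.slide hq2 c (P2 ++ T)).trans (RB.pair_conj q c (P2 ++ T))).app_left P1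
            rwa [hcc] at h5
          have s3 : RB (P1 ++ (c :: (q' :: q' :: (P2 ++ T))))
              (P1 ++ (c :: (P2 ++ (q' :: q' :: T)))) :=
            ((RB.slideN hq'2 P2 T).symm.cons c).app_left P1
          have s4 : RB (P1 ++ (c :: (P2 ++ (q' :: q' :: T))))
              (P1 ++ (c :: (P2 ++ (q' :: q :: Equiv.swap a b :: List.replicate j q)))) := by
            apply Relation.EqvGen.rel
            refine ⟨P1 ++ c :: P2 ++ [q'], List.replicate j q, q', q, ?_, ?_⟩
            · rw [hTdef]; simp [List.replicate_succ]
            · rw [hqq]; simp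
          set L5 := P1 ++ (c :: (P2 ++ (q' :: q :: Equiv.swap a b :: List.replicate j q)))
            with hL5def
          have hR5 : RB l L5 := hPQ.trans (s1.trans (s2.trans (s3.trans s4)))
          have hxq' : x ∈ q'.support := by
            rw [hq'def, support_swap (fun hc' => hbx hc'.symm)]; simp
          have hxab : x ∉ (Equiv.swap a b).support := by
            rw [support_swap (Ne.symm hba)]
            simp only [Finset.mem_insert, Finset.mem_singleton]
            push_neg
            exact ⟨fun hc' => hxa hc', fun hc' => hbx hc'.symm⟩
          have hxcL5 : xc x L5 = j + 2 := by
            rw [hL5def, xc_append]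
            have hfree1 : xc x P1 = 0 :=
              xc_of_free (fun τ hτ => hP τ (by rw [hPsplit]; simp [hτ]))
            have hfree2 : xc x P2 = 0 :=
              xc_of_free (fun τ hτ => hP τ (by rw [hPsplit]; simp [hτ]))
            have hfull : xc x (List.replicate j q) = j := by
              rw [xc_of_full (fun τ hτ => by rw [(List.mem_replicate.mp hτ).2]; exact hqx)]
              exact List.length_replicate
            rw [hfree1]
            simp only [xc, if_neg hcx, xc_append, hfree2, if_pos hxq', if_pos hqx,
              if_neg hxab, hfull]
            omega
          have hsw5 : SwA A L5 := (hR5.swA_prod).1.mp hsw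
          have hcl5 : Subgroup.closure {y | y ∈ L5} = fixingOutside A := by
            rw [← hR5.closure_eq]; exact hcl
          obtain ⟨P', m, a', hfin, h1', h2', h3', h4', h5'⟩ :=
            ih L5 (by omega) hsw5 hcl5
          exact ⟨P', m, a', hR5.trans hfin, h1', h2', h3', h4', h5'⟩
      · -- two distinct adjacent tail entries: cancel one occurrence of x
        have hτaQ : τa ∈ Q := by rw [hQeq]; simp
        have hτbQ : τb ∈ Q := by rw [hQeq]; simp
        have hτasw := hswPQ τa (List.mem_append.mpr (Or.inr hτaQ))
        have hτbsw := hswPQ τb (List.mem_append.mpr (Or.inr hτbQ))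
        obtain ⟨a, hax, hτaeq⟩ := swap_x_form hτasw.1 (hQ τa hτaQ)
        obtain ⟨b, hbx, hτbeq⟩ := swap_x_form hτbsw.1 (hQ τb hτbQ)
        have hba : b ≠ a := by
          intro hc
          subst hc
          exact hab (by rw [hτaeq, hτbeq])
        have hbb : τb * τa * τb = Equiv.swap b a := by
          have h1 := swap_apply_apply τb x a
          have e1 : τb x = b := by rw [hτbeq]; exact Equiv.swap_apply_left x b
          have e2 : τb a = a := by
            rw [hτbeq]
            exact Equiv.swap_apply_of_ne_of_ne hax hba.symm
          rw [e1, e2, swap_inv_eq hτbsw.1, ← hτaeq] at h1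
          exact h1.symm
        have s1 : RB (P ++ Q) ((P ++ Q1) ++ τb :: Equiv.swap b a :: Q2) := by
          apply Relation.EqvGen.rel
          refine ⟨P ++ Q1, Q2, τa, τb, ?_, ?_⟩
          · rw [hQeq]; simp
          · rw [hbb]
        set L5 := (P ++ Q1) ++ τb :: Equiv.swap b a :: Q2 with hL5def
        have hR5 : RB l L5 := hPQ.trans s1
        have hxions : x ∉ (Equiv.swap b a).support := by
          rw [support_swap hba]
          simp only [Finset.mem_insert, Finset.mem_singleton]
          push_neg
          exact ⟨fun hc' => hbx hc'.symm, fun hc' => hax hc'.symm⟩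
        have hxcL5 : xc x L5 + 1 = xc x l := by
          have hfreeP : xc x P = 0 := xc_of_free hP
          have hfullQ1 : xc x Q1 = Q1.length :=
            xc_of_full (fun τ hτ => hQ τ (by rw [hQeq]; simp [hτ]))
          have hfullQ2 : xc x Q2 = Q2.length :=
            xc_of_full (fun τ hτ => hQ τ (by rw [hQeq]; simp [hτ]))
          have hQlen : Q.length = Q1.length + Q2.length + 2 := by rw [hQeq]; simp; omega
          rw [hL5def, xc_append, xc_append, hfreeP, hfullQ1]
          simp only [xc, if_pos (hQ τb hτbQ), if_neg hxions, hfullQ2]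
          omega
        have hsw5 : SwA A L5 := (hR5.swA_prod).1.mp hsw
        have hcl5 : Subgroup.closure {y | y ∈ L5} = fixingOutside A := by
          rw [← hR5.closure_eq]; exact hcl
        obtain ⟨P', m, a', hfin, h1', h2', h3', h4', h5'⟩ :=
          ih L5 (by omega) hsw5 hcl5
        exact ⟨P', m, a', hR5.trans hfin, h1', h2', h3', h4', h5'⟩

lemma prod_fix {P : List (Perm (Fin d))} {x : Fin d} (hP : ∀ c ∈ P, x ∉ c.support) :
    P.prod x = x := by
  induction P with
  | nil => simp
  | cons c t ih =>
      rw [List.prod_cons, Perm.mul_apply, ih (fun c' hc' => hP c' (by simp [hc']))]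
      exact notMem_support.mp (hP c (by simp))

lemma rtg_drop_x {P : List (Perm (Fin d))} {x a : Fin d} {m : ℕ}
    (hP : ∀ c ∈ P, x ∉ c.support) (hax : a ≠ x) :
    ∀ u v, Relation.ReflTransGen
        (stepE {y | y ∈ P ++ List.replicate m (Equiv.swap x a)}) u v →
      Relation.ReflTransGen (stepE {y | y ∈ P})
        (if u = x then a else u) (if v = x then a else v) := by
  intro u v h
  induction h with
  | refl => exact Relation.ReflTransGen.refl
  | @tail v' v h1 hstep ih =>
      obtain ⟨τ, hτ, hv', hv⟩ := hstep
      rcases List.mem_append.mp hτ with hp | hq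
      · have hv'x : v' ≠ x := fun hc => hP τ hp (hc ▸ hv')
        have hvx : v ≠ x := fun hc => hP τ hp (hc ▸ hv)
        rw [if_neg hv'x] at ih
        rw [if_neg hvx]
        exact ih.tail ⟨τ, hp, hv', hv⟩
      · have hτ' : τ = Equiv.swap x a := (List.mem_replicate.mp hq).2
        have hsupp : τ.support = {x, a} := by
          rw [hτ']; exact support_swap (fun hc => hax hc.symm)
        have hval : ∀ w : Fin d, w ∈ τ.support → (if w = x then a else w) = a := by
          intro w hw
          rw [hsupp] at hw
          rcases Finset.mem_insert.mp hw with rfl | hw'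
          · rw [if_pos rfl]
          · rw [Finset.mem_singleton] at hw'
            subst hw'
            rw [if_neg hax]
        rw [hval v hv]
        rw [hval v' hv'] at ih
        exact ih

lemma afterReduce {A : Finset (Fin d)} {x a : Fin d} (h3 : 3 ≤ A.card)
    {P : List (Perm (Fin d))} {m : ℕ}
    (hswL : SwA A (P ++ List.replicate m (Equiv.swap x a)))
    (hclL : Subgroup.closure {y | y ∈ P ++ List.replicate m (Equiv.swap x a)} =
      fixingOutside A)
    (hP : ∀ c ∈ P, x ∉ c.support) (hax : a ≠ x) :
    SwA (A.erase x) P ∧ Subgroup.closure {y | y ∈ P} = fixingOutside (A.erase x) := by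
  have hswP : SwA (A.erase x) P := by
    intro τ hτ
    have h1 := hswL τ (List.mem_append.mpr (Or.inl hτ))
    refine ⟨h1.1, fun z hz => Finset.mem_erase.mpr ⟨?_, h1.2 hz⟩⟩
    intro hc
    exact hP τ hτ (hc ▸ hz)
  refine ⟨hswP, closure_eq_of_conn hswP ?_⟩
  intro u hu v hv
  rw [Finset.mem_erase] at hu hv
  have hconn := conn_of_closure (by omega) hclL u hu.2 v hv.2
  have := rtg_drop_x hP hax u v hconn
  rwa [if_neg hu.1, if_neg hv.1] at this

lemma conj_pair {P : List (Perm (Fin d))} (hsw : ∀ c ∈ P, c.IsSwap) :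
    ∀ σ ∈ Subgroup.closure {y | y ∈ P}, ∀ (τ : Perm (Fin d)), τ * τ = 1 →
      ∀ t, RB (P ++ τ :: τ :: t) (P ++ (σ * τ * σ⁻¹) :: (σ * τ * σ⁻¹) :: t) := by
  intro σ hσ
  induction hσ using Subgroup.closure_induction with
  | mem c hc =>
      intro τ hτ t
      obtain ⟨P1, P2, rfl⟩ := List.append_of_mem hc
      have hcsw := hsw c hc
      have hc2 : c * c = 1 := swap_sq hcsw
      have hcinv : c⁻¹ = c := swap_inv_eq hcsw
      have hcτ2 : (c * τ * c) * (c * τ * c) = 1 := by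
        have e1 : (c * τ * c) * (c * τ * c) = c * (τ * ((c * c) * τ)) * c := by group
        rw [e1, hc2, one_mul, hτ, mul_one, hc2]
      have s1 : RB ((P1 ++ c :: P2) ++ τ :: τ :: t) (P1 ++ (c :: (τ :: τ :: (P2 ++ t)))) := by
        have := ((RB.slideN hτ P2 t).cons c).app_left P1
        simpa using this
      have s2 : RB (P1 ++ (c :: (τ :: τ :: (P2 ++ t))))
          (P1 ++ (c :: ((c * τ * c) :: (c * τ * c) :: (P2 ++ t)))) :=
        ((RB.slide hτ c (P2 ++ t)).trans (RB.pair_conj τ c (P2 ++ t))).app_left P1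
      have s3 : RB (P1 ++ (c :: ((c * τ * c) :: (c * τ * c) :: (P2 ++ t))))
          ((P1 ++ c :: P2) ++ (c * τ * c) :: (c * τ * c) :: t) := by
        have := ((RB.slideN hcτ2 P2 t).symm.cons c).app_left P1
        simpa using this
      have := (s1.trans s2).trans s3
      rwa [show c * τ * c⁻¹ = c * τ * c by rw [hcinv]]
  | one =>
      intro τ hτ t
      simpa using (Relation.EqvGen.refl (P ++ τ :: τ :: t) : RB _ _)
  | mul σ1 σ2 h1 h2 ih1 ih2 =>
      intro τ hτ t
      have hsq : (σ2 * τ * σ2⁻¹) * (σ2 * τ * σ2⁻¹) = 1 := by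
        have e1 : (σ2 * τ * σ2⁻¹) * (σ2 * τ * σ2⁻¹) = σ2 * (τ * τ) * σ2⁻¹ := by group
        rw [e1, hτ]; group
      have step1 := ih2 τ hτ t
      have step2 := ih1 (σ2 * τ * σ2⁻¹) hsq t
      have e : σ1 * σ2 * τ * (σ1 * σ2)⁻¹ = σ1 * (σ2 * τ * σ2⁻¹) * σ1⁻¹ := by group
      rw [e]
      exact step1.trans step2
  | inv σ1 h1 ih =>
      intro τ hτ t
      have hsq : (σ1⁻¹ * τ * σ1) * (σ1⁻¹ * τ * σ1) = 1 := by
        have e1 : (σ1⁻¹ * τ * σ1) * (σ1⁻¹ * τ * σ1) = σ1⁻¹ * (τ * τ) * σ1 := by group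
        rw [e1, hτ]; group
      have := ih (σ1⁻¹ * τ * σ1) hsq t
      have e : σ1 * (σ1⁻¹ * τ * σ1) * σ1⁻¹ = τ := by group
      rw [e] at this
      have e2 : σ1⁻¹ * τ * (σ1⁻¹)⁻¹ = σ1⁻¹ * τ * σ1 := by group
      rw [e2]
      exact this.symm

lemma entry_eq_of_card_two {A : Finset (Fin d)} {u v : Fin d} (huv : u ≠ v) (hA : A = {u, v})
    {τ : Perm (Fin d)} (h : τ.IsSwap) (hs : τ.support ⊆ A) : τ = Equiv.swap u v := by
  obtain ⟨p, q, hpq, rfl⟩ := h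
  have hp : p ∈ ({u, v} : Finset (Fin d)) := by
    rw [← hA]; exact hs (by rw [support_swap hpq]; simp)
  have hq : q ∈ ({u, v} : Finset (Fin d)) := by
    rw [← hA]; exact hs (by rw [support_swap hpq]; simp)
  simp only [Finset.mem_insert, Finset.mem_singleton] at hp hq
  rcases hp with rfl | rfl <;> rcases hq with rfl | rfl
  · exact absurd rfl hpq
  · rfl
  · exact Equiv.swap_comm _ _
  · exact absurd rfl hpq

lemma main_trans : ∀ (n : ℕ), 2 ≤ n → ∀ (A : Finset (Fin d)), A.card = n →
    ∀ (l l' : List (Perm (Fin d))), SwA A l → SwA A l' → l.length = l'.length →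
    l.prod = l'.prod →
    Subgroup.closure {y | y ∈ l} = fixingOutside A →
    Subgroup.closure {y | y ∈ l'} = fixingOutside A → RB l l' := by
  intro n
  induction n using Nat.strong_induction_on with
  | _ n ih =>
  intro hn A hA l l' hsw hsw' hlen hprod hcl hcl'
  by_cases h2 : n = 2
  · -- base case: only one transposition available
    subst h2
    obtain ⟨u, v, huv, hA2⟩ := Finset.card_eq_two.mp hA
    have hl : l = List.replicate l.length (Equiv.swap u v) := by
      rw [List.eq_replicate_iff]
      exact ⟨rfl, fun τ hτ => entry_eq_of_card_two huv hA2 (hsw τ hτ).1 (hsw τ hτ).2⟩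
    have hl' : l' = List.replicate l'.length (Equiv.swap u v) := by
      rw [List.eq_replicate_iff]
      exact ⟨rfl, fun τ hτ => entry_eq_of_card_two huv hA2 (hsw' τ hτ).1 (hsw' τ hτ).2⟩
    rw [hl, hl', hlen]
    exact Relation.EqvGen.refl _
  · have h3 : 3 ≤ A.card := by omega
    obtain ⟨x, hx⟩ := Finset.card_pos.mp (by omega : 0 < A.card)
    obtain ⟨P, m, a, hR, hP, hm1, hm2, haA, hax⟩ :=
      reduceX hx h3 (xc x l) l le_rfl hsw hcl
    obtain ⟨P', m', a', hR', hP', hm1', hm2', haA', hax'⟩ :=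
      reduceX hx h3 (xc x l') l' le_rfl hsw' hcl'
    set L2 := P ++ List.replicate m (Equiv.swap x a) with hL2
    set L2' := P' ++ List.replicate m' (Equiv.swap x a') with hL2'
    have hswL2 : SwA A L2 := (hR.swA_prod).1.mp hsw
    have hswL2' : SwA A L2' := (hR'.swA_prod).1.mp hsw'
    have hclL2 : Subgroup.closure {y | y ∈ L2} = fixingOutside A := by
      rw [← hR.closure_eq]; exact hcl
    have hclL2' : Subgroup.closure {y | y ∈ L2'} = fixingOutside A := by
      rw [← hR'.closure_eq]; exact hcl'
    have hprodL2 : L2.prod = l.prod := ((hR.swA_prod).2 hsw).symm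
    have hprodL2' : L2'.prod = l'.prod := ((hR'.swA_prod).2 hsw').symm
    obtain ⟨hswP, hclP⟩ := afterReduce h3 hswL2 hclL2 hP hax
    obtain ⟨hswP', hclP'⟩ := afterReduce h3 hswL2' hclL2' hP' hax'
    have hpe : L2.prod = P.prod * (Equiv.swap x a) ^ m := by
      rw [hL2, List.prod_append, List.prod_replicate]
    have hpe' : L2'.prod = P'.prod * (Equiv.swap x a') ^ m' := by
      rw [hL2', List.prod_append, List.prod_replicate]
    have hfixP : P.prod x = x := prod_fix hP
    have hfixP' : P'.prod x = x := prod_fix hP'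
    set g := l.prod with hg
    -- characterize m via g x
    have hchar : ∀ (PP : List (Perm (Fin d))) (mm : ℕ) (aa : Fin d), PP.prod x = x →
        aa ≠ x → 1 ≤ mm → mm ≤ 2 →
        ((mm = 1 ∧ (PP.prod * (Equiv.swap x aa) ^ mm) aa = x ∧
            (PP.prod * Equiv.swap x aa ^ mm) x ≠ x) ∨
         (mm = 2 ∧ PP.prod * Equiv.swap x aa ^ mm = PP.prod)) := by
      intro PP mm aa hfix haax hmm1 hmm2
      interval_cases mm
      · left
        refine ⟨rfl, ?_, ?_⟩
        · rw [pow_one, Perm.mul_apply, Equiv.swap_apply_right, hfix]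
        · rw [pow_one, Perm.mul_apply, Equiv.swap_apply_left]
          intro hc
          have : PP.prod aa = PP.prod x := by rw [hc, hfix]
          exact haax (PP.prod.injective this)
      · right
        refine ⟨rfl, ?_⟩
        rw [pow_two, Equiv.swap_mul_self, mul_one]
    have hcase := hchar P m a hfixP hax hm1 hm2
    have hcase' := hchar P' m' a' hfixP' hax' hm1' hm2'
    have hgL2 : P.prod * Equiv.swap x a ^ m = g := by rw [← hpe, hprodL2]
    have hgL2' : P'.prod * Equiv.swap x a' ^ m' = g := by
      rw [← hpe', hprodL2', hprod]
    rw [hgL2] at hcase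
    rw [hgL2'] at hcase'
    have hlenP : P.length + m = l.length := by
      have := hR.length_eq
      rw [hL2] at this
      simp at this
      omega
    have hlenP' : P'.length + m' = l'.length := by
      have := hR'.length_eq
      rw [hL2'] at this
      simp at this
      omega
    have hcardA' : (A.erase x).card = n - 1 := by
      rw [Finset.card_erase_of_mem hx, hA]
    have h2A' : 2 ≤ n - 1 := by omega
    rcases hcase with ⟨hm, hga, hgx⟩ | ⟨hm, hgp⟩ <;>
      rcases hcase' with ⟨hm', hga', hgx'⟩ | ⟨hm', hgp'⟩
    · -- m = m' = 1
      subst hm; subst hm'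
      have haa : a = a' := g.injective (by rw [hga, hga'])
      subst haa
      have hPP' : P.prod = P'.prod := by
        have e1 : P.prod = g * (Equiv.swap x a)⁻¹ := by
          rw [← hgL2, pow_one, mul_inv_cancel_right]
        have e2 : P'.prod = g * (Equiv.swap x a)⁻¹ := by
          rw [← hgL2', pow_one, mul_inv_cancel_right]
        rw [e1, e2]
      have hRB := ih (n - 1) (by omega) h2A' (A.erase x) hcardA' P P' hswP hswP'
        (by omega) hPP' hclP hclP'
      have := hRB.app_right (List.replicate 1 (Equiv.swap x a))
      exact (hR.trans this).trans hR'.symm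
    · exact absurd (by rw [hgp']; exact hfixP' : g x = x) hgx
    · exact absurd (by rw [hgp]; exact hfixP) hgx'
    · -- m = m' = 2
      subst hm; subst hm'
      have hPP' : P.prod = P'.prod := hgp.symm.trans hgp'
      -- conjugate the tail pair of L2' from swap x a' to swap x a
      have haA'e : a ∈ A.erase x := Finset.mem_erase.mpr ⟨hax, haA⟩
      have haA'e' : a' ∈ A.erase x := Finset.mem_erase.mpr ⟨hax', haA'⟩
      set σ := Equiv.swap a' a with hσ
      have hσmem : σ ∈ Subgroup.closure {y | y ∈ P'} := by
        rw [hclP']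
        exact swap_mem_fixingOutside haA'e' haA'e
      have hσx : σ x = x :=
        Equiv.swap_apply_of_ne_of_ne (fun hc => hax' hc.symm) (fun hc => hax hc.symm)
      have hσa' : σ a' = a := Equiv.swap_apply_left a' a
      have hconj : σ * Equiv.swap x a' * σ⁻¹ = Equiv.swap x a := by
        have h1 := swap_apply_apply σ x a'
        rw [hσx, hσa'] at h1
        exact h1.symm
      have hpair := conj_pair (fun c hc => (hswP' c hc).1) σ hσmem (Equiv.swap x a')
        (Equiv.swap_mul_self x a') []
      rw [hconj] at hpair
      have hL2'eq : L2' = P' ++ Equiv.swap x a' :: Equiv.swap x a' :: [] := by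
        rw [hL2']; rfl
      have hRB := ih (n - 1) (by omega) h2A' (A.erase x) hcardA' P P' hswP hswP'
        (by omega) hPP' hclP hclP'
      have hstep := hRB.app_right (Equiv.swap x a :: Equiv.swap x a :: [])
      have hchain : RB l' (P' ++ Equiv.swap x a :: Equiv.swap x a :: []) := by
        rw [hL2'eq] at hR'
        exact hR'.trans hpair
      have hchain2 : RB l (P ++ Equiv.swap x a :: Equiv.swap x a :: []) := by
        have : L2 = P ++ Equiv.swap x a :: Equiv.swap x a :: [] := by rw [hL2]; rfl
        rw [← this]
        exact hR
      exact (hchain2.trans hstep).trans hchain.symm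

lemma split : ∀ (n : ℕ), 2 ≤ n → ∀ (A : Finset (Fin d)), A.card = n →
    ∀ (l : List (Perm (Fin d))), SwA A l →
    Subgroup.closure {y | y ∈ l} = fixingOutside A → 2 * n ≤ l.length →
    ∃ (l0 : List (Perm (Fin d))) (τ : Perm (Fin d)), τ.IsSwap ∧
      RB l (l0 ++ [τ, τ]) ∧ Subgroup.closure {y | y ∈ l0} = fixingOutside A := by
  intro n
  induction n using Nat.strong_induction_on with
  | _ n ih =>
  intro hn A hA l hsw hcl hw
  by_cases h2 : n = 2
  · subst h2
    obtain ⟨u, v, huv, hA2⟩ := Finset.card_eq_two.mp hA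
    have hl : l = List.replicate l.length (Equiv.swap u v) := by
      rw [List.eq_replicate_iff]
      exact ⟨rfl, fun τ hτ => entry_eq_of_card_two huv hA2 (hsw τ hτ).1 (hsw τ hτ).2⟩
    obtain ⟨j, hj⟩ : ∃ j, l.length = j + 2 := ⟨l.length - 2, by omega⟩
    refine ⟨List.replicate j (Equiv.swap u v), Equiv.swap u v, ⟨u, v, huv, rfl⟩, ?_, ?_⟩
    · have e : List.replicate (j + 2) (Equiv.swap u v) =
          List.replicate j (Equiv.swap u v) ++ [Equiv.swap u v, Equiv.swap u v] := by
        rw [List.replicate_add]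
        rfl
      rw [hl, hj, e]
      exact Relation.EqvGen.refl _
    · have hsets : {y | y ∈ List.replicate j (Equiv.swap u v)} = {y | y ∈ l} := by
        ext z
        simp only [Set.mem_setOf_eq, List.mem_replicate]
        constructor
        · intro hz
          rw [hz.2, hl]
          exact List.mem_replicate.mpr ⟨by omega, rfl⟩
        · intro hz
          rw [hl] at hz
          exact ⟨by omega, (List.mem_replicate.mp hz).2⟩
      rw [hsets]
      exact hcl
  · have h3 : 3 ≤ A.card := by omega
    obtain ⟨x, hx⟩ := Finset.card_pos.mp (by omega : 0 < A.card)
    obtain ⟨P, m, a, hR, hP, hm1, hm2, haA, hax⟩ := reduceX hx h3 (xc x l) l le_rfl hsw hcl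
    set L2 := P ++ List.replicate m (Equiv.swap x a) with hL2
    have hswL2 : SwA A L2 := (hR.swA_prod).1.mp hsw
    have hclL2 : Subgroup.closure {y | y ∈ L2} = fixingOutside A := by
      rw [← hR.closure_eq]; exact hcl
    obtain ⟨hswP, hclP⟩ := afterReduce h3 hswL2 hclL2 hP hax
    have hlenP : P.length + m = l.length := by
      have := hR.length_eq
      rw [hL2] at this
      simp at this
      omega
    have hcardA' : (A.erase x).card = n - 1 := by
      rw [Finset.card_erase_of_mem hx, hA]
    have h2A' : 2 ≤ n - 1 := by omega
    obtain ⟨P0, τ, hτsw, hR0, hclP0⟩ :=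
      ih (n - 1) (by omega) h2A' (A.erase x) hcardA' P hswP hclP (by omega)
    have hτ2 : τ * τ = 1 := swap_sq hτsw
    have hswP0 : SwA (A.erase x) P0 := by
      have hall := (hR0.swA_prod (A := A.erase x)).1.mp hswP
      exact fun z hz => hall z (by simp [hz])
    refine ⟨P0 ++ List.replicate m (Equiv.swap x a), τ, hτsw, ?_, ?_⟩
    · have s1 : RB L2 ((P0 ++ [τ, τ]) ++ List.replicate m (Equiv.swap x a)) :=
        hR0.app_right _
      have s2 : RB ((P0 ++ [τ, τ]) ++ List.replicate m (Equiv.swap x a))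
          ((P0 ++ List.replicate m (Equiv.swap x a)) ++ [τ, τ]) := by
        have h5 := ((RB.slideN hτ2 (List.replicate m (Equiv.swap x a)) []).symm).app_left P0
        simpa using h5
      exact (hR.trans s1).trans s2
    · apply closure_eq_of_conn
      · intro z hz
        rcases List.mem_append.mp hz with h | h
        · have hz1 := hswP0 z h
          exact ⟨hz1.1, hz1.2.trans (Finset.erase_subset x A)⟩
        · have hz2 : z = Equiv.swap x a := (List.mem_replicate.mp h).2
          subst hz2
          refine ⟨⟨x, a, fun hc => hax hc.symm, rfl⟩, ?_⟩
          rw [support_swap (fun hc => hax hc.symm)]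
          intro w hw
          rcases Finset.mem_insert.mp hw with rfl | hw'
          · exact hx
          · rw [Finset.mem_singleton] at hw'
            subst hw'
            exact haA
      · have hconnP0 : Conn (A.erase x) {y | y ∈ P0} := conn_of_closure (by omega) hclP0
        intro u hu v hv
        set S := {y | y ∈ P0 ++ List.replicate m (Equiv.swap x a)} with hS
        have hmono : ∀ p q : Fin d, Relation.ReflTransGen (stepE {y | y ∈ P0}) p q →
            Relation.ReflTransGen (stepE S) p q := by
          intro p q h
          refine Relation.ReflTransGen.mono ?_ p q h
          rintro p' q' ⟨τ', h1', h2', h3'⟩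
          exact ⟨τ', by simp only [hS, Set.mem_setOf_eq, List.mem_append]; exact Or.inl h1',
            h2', h3'⟩
        have hedge : stepE S x a := by
          refine ⟨Equiv.swap x a, ?_, ?_, ?_⟩
          · simp only [hS, Set.mem_setOf_eq, List.mem_append]
            right
            exact List.mem_replicate.mpr ⟨by omega, rfl⟩
          · rw [support_swap (fun hc => hax hc.symm)]; simp
          · rw [support_swap (fun hc => hax hc.symm)]; simp
        have hto : ∀ w ∈ A, Relation.ReflTransGen (stepE S) w (if w = x then a else w) := by
          intro w hw
          by_cases hwx : w = x
          · rw [if_pos hwx, hwx]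
            exact Relation.ReflTransGen.single hedge
          · rw [if_neg hwx]
        have hmem' : ∀ w ∈ A, (if w = x then a else w) ∈ A.erase x := by
          intro w hw
          by_cases hwx : w = x
          · rw [if_pos hwx]
            exact Finset.mem_erase.mpr ⟨hax, haA⟩
          · rw [if_neg hwx]
            exact Finset.mem_erase.mpr ⟨hwx, hw⟩
        have hmid := hmono _ _ (hconnP0 _ (hmem' u hu) _ (hmem' v hv))
        exact ((hto u hu).trans hmid).trans (rtg_symm (hto v hv))

end Perm

end KTaux

/-- Kluitmann/Hurwitz transitivity with fixed product `g ∈ S_A`: the braid group acts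
transitively on sequences of `w` transpositions in `S_A` with product `g` generating
`S_A`, provided `w ≥ #A + s - 2` and `w ≡ #A - s (mod 2)` where `s` is the number of
cycles of `g` on `A`; in particular, when `w ≥ 2 #A` any such sequence can be brought
to the form `(τ'_1,...,τ'_{w-2}, τ, τ)` with `τ'_1,...,τ'_{w-2}` generating `S_A`. -/
theorem kluitmann_transitivity (d : ℕ) (A : Finset (Fin d)) (hA : 2 ≤ A.card)
    (g : Equiv.Perm (Fin d)) (hg : g ∈ fixingOutside A)
    (s : ℕ) (hs : s = A.card - (g.cycleType.sum - Multiset.card g.cycleType))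
    (w : ℕ) (hw : A.card + s - 2 ≤ w) (hmod : w ≡ A.card - s [MOD 2])
    (l l' : List (Equiv.Perm (Fin d)))
    (hl : ∀ x ∈ l, x.IsSwap) (hl' : ∀ x ∈ l', x.IsSwap)
    (hlA : ∀ x ∈ l, x.support ⊆ A) (hlA' : ∀ x ∈ l', x.support ⊆ A)
    (hlen : l.length = w) (hlen' : l'.length = w)
    (hp : l.prod = g) (hp' : l'.prod = g)
    (hgen : Subgroup.closure {x | x ∈ l} = fixingOutside A)
    (hgen' : Subgroup.closure {x | x ∈ l'} = fixingOutside A) :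
    Relation.EqvGen BraidMove l l' ∧
    (2 * A.card ≤ w →
      ∃ (l0 : List (Equiv.Perm (Fin d))) (τ : Equiv.Perm (Fin d)),
        τ.IsSwap ∧ (∀ x ∈ l0, x.IsSwap) ∧
        Relation.EqvGen BraidMove l (l0 ++ [τ, τ]) ∧
        Subgroup.closure {x | x ∈ l0} = fixingOutside A) := by
  have hswl : KTaux.SwA A l := fun τ hτ => ⟨hl τ hτ, hlA τ hτ⟩
  have hswl' : KTaux.SwA A l' := fun τ hτ => ⟨hl' τ hτ, hlA' τ hτ⟩
  constructor
  · exact KTaux.main_trans A.card hA A rfl l l' hswl hswl'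
      (by rw [hlen, hlen']) (by rw [hp, hp']) hgen hgen'
  · intro h2w
    obtain ⟨l0, τ, hτsw, hRB, hcl0⟩ :=
      KTaux.split A.card hA A rfl l hswl hgen (by omega)
    refine ⟨l0, τ, hτsw, ?_, hRB, hcl0⟩
    have hswall : KTaux.SwA A (l0 ++ [τ, τ]) := (hRB.swA_prod).1.mp hswl
    exact fun z hz => (hswall z (List.mem_append.mpr (Or.inl hz))).1
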